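/- arXiv:1901.06517 — 3 statements merged into one kernel-verified Lean document; each statement's English description precedes it below -/
import Mathlib

section
/- Let M₀, M₁, …, M_n be nonempty convex subsets of a Banach space Z with M_j open for j = 1,…,n. Then M₀ ∩ M₁ ∩ ⋯ ∩ M_n = ∅ if and only if there exist z₀*, z₁*, …, z_n* ∈ Z*, not all zero, such that z₀* + z₁* + ⋯ + z_n* = 0 and Σ_{j=0}^n inf_{z ∈ M_j} z_j*(z) ≥ 0. -/
/-!
If `M₀ ∩ ⋂ M_j = ∅`, the open convex set `Π_{j ≥ 1} M_j ⊆ Zⁿ` misses the diagonal copy of `M₀`,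
so Hahn–Banach gives a functional `φ` on `Zⁿ` separating them. Splitting `φ` into its components
`z_j* = -φ ∘ single j` and setting `z₀* = φ ∘ diag` yields functionals summing to `0` with
`Σ z_j*(w_j) > 0` on `Π M_j`; the infima of the `z_j*` over the `M_j` then have nonnegative sum.
Conversely, at a common point `z` the inequalities force each `z_j*` to attain its infimum over
`M_j` at `z`; some `z_j*` with `j ≥ 1` is nonzero, contradicting Fermat's rule on the open `M_j`.
-/

open Set

section LowerBounds

variable {ι α : Type*} [Fintype ι] {S : ι → Set α} {g : ι → α → ℝ}

theorem bddBelow_image_of_sum_nonneg (w : ι → α) (hw : w ∈ univ.pi S)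
    (h : ∀ w ∈ univ.pi S, 0 ≤ ∑ j, g j (w j)) (j : ι) : BddBelow (g j '' S j) := by
  classical
  refine ⟨-∑ k ∈ Finset.univ \ {j}, g k (w k), ?_⟩
  rintro _ ⟨z, hz, rfl⟩
  have hupd : Function.update w j z ∈ univ.pi S := by
    intro k _
    rcases eq_or_ne k j with rfl | hk
    · simpa using hz
    · simpa [hk] using hw k (mem_univ k)
  have := h _ hupd
  simp only [Function.apply_update (fun k => g k) w j z,
    Finset.sum_update_of_mem (Finset.mem_univ j)] at this
  linarith

theorem exists_lowerBounds_sum_nonneg (hS : ∀ j, (S j).Nonempty)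
    (h : ∀ w ∈ univ.pi S, 0 ≤ ∑ j, g j (w j)) :
    ∃ c : ι → ℝ, (∀ j, ∀ z ∈ S j, c j ≤ g j z) ∧ 0 ≤ ∑ j, c j := by
  obtain ⟨w, hw⟩ := univ_pi_nonempty_iff.2 hS
  have hbdd := bddBelow_image_of_sum_nonneg w hw h
  refine ⟨fun j => sInf (g j '' S j), fun j z hz => csInf_le (hbdd j) ⟨z, hz, rfl⟩, ?_⟩
  refine le_of_forall_pos_lt_add fun ε hε => ?_
  set δ := ε / (Fintype.card ι + 1)
  have hδ : 0 < δ := by positivity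
  have hcard : Fintype.card ι * δ < ε := by
    rw [mul_div_assoc', div_lt_iff₀ (by positivity)]
    linarith
  have hnear : ∀ j, ∃ z ∈ S j, g j z < sInf (g j '' S j) + δ := fun j => by
    obtain ⟨_, ⟨z, hz, rfl⟩, hlt⟩ :=
      exists_lt_of_csInf_lt ((hS j).image (g j)) (lt_add_of_pos_right _ hδ)
    exact ⟨z, hz, hlt⟩
  choose v hv hlt using hnear
  calc 0 ≤ ∑ j, g j (v j) := h v fun j _ => hv j
    _ ≤ ∑ j, (sInf (g j '' S j) + δ) := Finset.sum_le_sum fun j _ => (hlt j).le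
    _ = ∑ j, sInf (g j '' S j) + Fintype.card ι * δ := by
      rw [Finset.sum_add_distrib, Finset.sum_const, Finset.card_univ, nsmul_eq_mul]
    _ < ∑ j, sInf (g j '' S j) + ε := by linarith

end LowerBounds

section Functionals

variable {Z : Type*} [NormedAddCommGroup Z] [NormedSpace ℝ Z] {ι : Type*} [Fintype ι]

theorem ContinuousLinearMap.apply_eq_sum_single [DecidableEq ι] (φ : (ι → Z) →L[ℝ] ℝ)
    (x : ι → Z) : φ x = ∑ i, φ (Pi.single i (x i)) := by
  conv_lhs => rw [← Finset.univ_sum_single x]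
  exact map_sum φ _ _

theorem exists_sum_eq_zero_and_pos_of_inter_iInter_eq_empty {M₀ : Set Z} {M : ι → Set Z}
    (hconv₀ : Convex ℝ M₀) (hconv : ∀ i, Convex ℝ (M i)) (hopen : ∀ i, IsOpen (M i))
    (h : M₀ ∩ ⋂ i, M i = ∅) :
    ∃ (f₀ : Z →L[ℝ] ℝ) (f : ι → Z →L[ℝ] ℝ), f₀ + ∑ i, f i = 0 ∧
      ∀ z ∈ M₀, ∀ x ∈ univ.pi M, 0 < f₀ z + ∑ i, f i (x i) := by
  classical
  let diag : Z →L[ℝ] ι → Z := ContinuousLinearMap.pi fun _ => ContinuousLinearMap.id ℝ Z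
  have hdisj : Disjoint (univ.pi M) (diag '' M₀) := by
    refine disjoint_left.2 fun x hx ⟨z, hz, hzx⟩ => ?_
    subst hzx
    have : z ∈ M₀ ∩ ⋂ i, M i := ⟨hz, mem_iInter.2 fun i => hx i (mem_univ i)⟩
    simp [h] at this
  obtain ⟨φ, u, hφx, hφz⟩ := geometric_hahn_banach_open (convex_pi fun i _ => hconv i)
    (isOpen_set_pi finite_univ fun i _ => hopen i) (hconv₀.linear_image diag.toLinearMap) hdisj
  let f : ι → Z →L[ℝ] ℝ := fun i => -φ.comp (ContinuousLinearMap.single ℝ (fun _ => Z) i)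
  have hdiag : φ.comp diag = -∑ i, f i := by
    ext z
    simpa [f, diag] using φ.apply_eq_sum_single (diag z)
  refine ⟨φ.comp diag, f, by rw [hdiag, neg_add_cancel], fun z hz x hx => ?_⟩
  have hx_sum : ∑ i, f i (x i) = -φ x := by
    simp [f, φ.apply_eq_sum_single x]
  have hφdiag : u ≤ φ (diag z) := hφz _ ⟨z, hz, rfl⟩
  rw [hx_sum, ContinuousLinearMap.comp_apply]
  linarith [hφx x hx]

theorem ContinuousLinearMap.eq_zero_of_isMinOn {f : Z →L[ℝ] ℝ} {U : Set Z} {z : Z}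
    (hU : IsOpen U) (hz : z ∈ U) (hmin : IsMinOn f U z) : f = 0 :=
  (hmin.isLocalMin (hU.mem_nhds hz)).hasFDerivAt_eq_zero f.hasFDerivAt

theorem iInter_eq_empty_of_separation (j₀ : ι) {M : ι → Set Z}
    (hopen : ∀ j, j ≠ j₀ → IsOpen (M j)) {f : ι → Z →L[ℝ] ℝ} (hf : ∃ j, f j ≠ 0)
    (hsum : ∑ j, f j = 0) {c : ι → ℝ} (hc : ∀ j, ∀ z ∈ M j, c j ≤ f j z)
    (hcsum : 0 ≤ ∑ j, c j) : ⋂ j, M j = ∅ := by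
  obtain ⟨j, hj₀, hj⟩ : ∃ j, j ≠ j₀ ∧ f j ≠ 0 := by
    by_contra! hzero
    obtain ⟨j, hj⟩ := hf
    rcases eq_or_ne j j₀ with rfl | hne
    · rw [← Finset.sum_eq_single j (fun k _ hk => hzero k hk) (absurd (Finset.mem_univ j))] at hj
      exact hj hsum
    · exact hj (hzero j hne)
  refine eq_empty_of_forall_notMem fun z hz => hj ?_
  rw [mem_iInter] at hz
  have hle : ∀ j ∈ Finset.univ, c j ≤ f j z := fun j _ => hc j z (hz j)
  have hfz : ∑ j, f j z = 0 := by simpa using DFunLike.congr_fun hsum z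
  have hattained := (Finset.sum_eq_sum_iff_of_le hle).1
    (le_antisymm (Finset.sum_le_sum hle) (hfz ▸ hcsum))
  refine ContinuousLinearMap.eq_zero_of_isMinOn (hopen j hj₀) (hz j) fun y hy => ?_
  rw [← hattained j (Finset.mem_univ j)]
  exact hc j y hy

end Functionals

/-- Dubovitskii–Milyutin type separation: nonempty convex sets `M₀, M₁, …, M_n` with
`M₁, …, M_n` open have empty intersection iff there exist continuous linear functionals
`z₀*, …, z_n*`, not all zero, summing to `0`, with `Σ_j inf_{M_j} z_j* ≥ 0`
(expressed via finite lower bounds `c j ≤ z_j*` on `M j` with `Σ c j ≥ 0`). -/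
theorem iInter_empty_iff_separation
    {Z : Type*} [NormedAddCommGroup Z] [NormedSpace ℝ Z]
    (n : ℕ) (M : Fin (n + 1) → Set Z)
    (hne : ∀ j, (M j).Nonempty) (hconv : ∀ j, Convex ℝ (M j))
    (hopen : ∀ j : Fin (n + 1), j ≠ 0 → IsOpen (M j)) :
    (⋂ j, M j) = ∅ ↔
      ∃ f : Fin (n + 1) → (Z →L[ℝ] ℝ), (∃ j, f j ≠ 0) ∧ (∑ j, f j) = 0 ∧
        ∃ c : Fin (n + 1) → ℝ, (∀ j, ∀ z ∈ M j, c j ≤ f j z) ∧ 0 ≤ ∑ j, c j := by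
  refine ⟨fun h => ?_, fun ⟨f, hf, hsum, c, hc, hcsum⟩ =>
    iInter_eq_empty_of_separation 0 hopen hf hsum hc hcsum⟩
  have h' : M 0 ∩ ⋂ i : Fin n, M i.succ = ∅ := by
    rw [← h]
    ext z
    simp [Fin.forall_fin_succ]
  obtain ⟨f₀, f, hsum, hpos⟩ := exists_sum_eq_zero_and_pos_of_inter_iInter_eq_empty (hconv 0)
    (fun i : Fin n => hconv i.succ) (fun i => hopen i.succ i.succ_ne_zero) h'
  have hF : ∀ w ∈ univ.pi M, 0 < ∑ j, (Fin.cons f₀ f : Fin (n + 1) → Z →L[ℝ] ℝ) j (w j) := by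
    intro w hw
    simpa [Fin.sum_univ_succ] using
      hpos (w 0) (hw 0 (mem_univ 0)) _ fun i _ => hw i.succ (mem_univ _)
  obtain ⟨c, hc, hcsum⟩ := exists_lowerBounds_sum_nonneg hne fun w hw => (hF w hw).le
  refine ⟨Fin.cons f₀ f, ?_, by rwa [Fin.sum_cons], c, hc, hcsum⟩
  by_contra! hzero
  obtain ⟨w, hw⟩ := univ_pi_nonempty_iff.2 hne
  simpa [hzero] using hF w hw
end

section
/- Let (Ξ, Σ, μ) be a complete σ-finite measure space, Z̃ a separable Banach space, K ⊆ Z̃ a nonempty closed set, and φ : Ξ → Z̃ a Σ-measurable map. Then the metric projection map ξ ↦ Π_K(φ(ξ)) := {y ∈ K : ‖y − φ(ξ)‖ = dist(φ(ξ), K)} is a Σ-measurable set-valued map; if Π_K(φ(ξ)) ≠ ∅ for every ξ, there exists a Σ-measurable selection ψ : Ξ → Z̃ with ‖ψ(ξ) − φ(ξ)‖ = dist(φ(ξ), K) for μ-a.e. ξ. -/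
/-!
The points whose nearest points in `K` meet a Borel set `B` form the projection to the first
factor of a Borel subset of `Z × Z`, hence an analytic set. Analytic sets are null measurable
for every finite measure: writing `A = range f` with `f` continuous on `ℕ → ℕ`, a greedy choice of
coordinate bounds `σ` yields compact sets `f '' {x | x ≤ σ}` exhausting the outer measure of `A`.
Pulling back along `φ` to a finite measure equivalent to `μ` and using completeness of `μ` makes
`ξ ↦ Π_K(φ ξ)` measurable. Its values are closed, so the Kuratowski–Ryll-Nardzewski argument gives
a measurable selection: a limit of measurable maps with values in a dense sequence, the `k`-th
one lying `2⁻ᵏ`-close both to `Π_K(φ ξ)` and to its predecessor.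
-/

open MeasureTheory Metric Set Topology Filter
open scoped ENNReal

theorem iInter_closure_image_subset_image_pi {Z : Type*} [MetricSpace Z] {f : (ℕ → ℕ) → Z}
    (hf : Continuous f) (σ : ℕ → ℕ) :
    ⋂ n, closure (f '' {x | ∀ i < n, x i ≤ σ i}) ⊆ f '' univ.pi fun i => Iic (σ i) := by
  intro y hy
  have hx : ∀ n : ℕ, ∃ x, (∀ i < n, x i ≤ σ i) ∧ dist (f x) y < 1 / (n + 1) := fun n => by
    obtain ⟨_, ⟨x, hx, rfl⟩, hd⟩ :=
      mem_closure_iff.1 (mem_iInter.1 hy n) _ Nat.one_div_pos_of_nat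
    exact ⟨x, hx, by rwa [dist_comm]⟩
  choose x hxσ hxy using hx
  -- the `n`-th term is bounded by `σ` on the first `n` coordinates, so the sequence is bounded
  let τ : ℕ → ℕ := fun i => max (σ i) ((Finset.range (i + 1)).sup fun n => x n i)
  have hxτ : ∀ n, x n ∈ univ.pi fun i => Iic (τ i) := fun n i _ => by
    rcases lt_or_ge i n with h | h
    · exact le_max_of_le_left (hxσ n i h)
    · exact le_max_of_le_right
        (Finset.le_sup (f := fun n => x n i) (Finset.mem_range.2 (by omega)))
  obtain ⟨a, -, ψ, hψ, hlim⟩ :=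
    (isCompact_univ_pi fun i => (finite_Iic (τ i)).isCompact).tendsto_subseq hxτ
  refine ⟨a, fun i _ => ?_, ?_⟩
  · refine (isClosed_le (continuous_apply i) continuous_const).mem_of_tendsto hlim ?_
    exact eventually_atTop.2
      ⟨i + 1, fun k hk => hxσ _ _ (by have := hψ.le_apply (x := k); omega)⟩
  · have hfx : Tendsto (fun n => f (x n)) atTop (𝓝 y) :=
      tendsto_iff_dist_tendsto_zero.2 (squeeze_zero (fun _ => dist_nonneg)
        (fun n => (hxy n).le) tendsto_one_div_add_atTop_nhds_zero_nat)
    exact tendsto_nhds_unique ((hf.tendsto a).comp hlim) (hfx.comp hψ.tendsto_atTop)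

section Capacity

variable {Z : Type*} [MeasurableSpace Z]

theorem exists_measure_image_le_image_inter_add (ν : Measure Z) [IsFiniteMeasure ν]
    (f : (ℕ → ℕ) → Z) (T : Set (ℕ → ℕ)) (n : ℕ) {δ : ℝ≥0∞} (hδ : δ ≠ 0) :
    ∃ k, ν (f '' T) ≤ ν (f '' (T ∩ {x | x n ≤ k})) + δ := by
  have hmono : Monotone fun k => f '' (T ∩ {x | x n ≤ k}) :=
    fun k l hkl => image_mono (inter_subset_inter_right _ fun x hx => le_trans hx hkl)
  have hunion : ⋃ k, f '' (T ∩ {x | x n ≤ k}) = f '' T := by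
    have hcover : ⋃ k, {x : ℕ → ℕ | x n ≤ k} = univ :=
      iUnion_eq_univ_iff.2 fun x => ⟨x n, show x n ≤ x n from le_rfl⟩
    rw [← image_iUnion, ← inter_iUnion, hcover, inter_univ]
  have : ν (f '' T) < ⨆ k, ν (f '' (T ∩ {x | x n ≤ k})) + δ := by
    rw [← ENNReal.iSup_add, ← hmono.measure_iUnion, hunion]
    exact ENNReal.lt_add_right (measure_ne_top ν _) hδ
  obtain ⟨k, hk⟩ := lt_iSup_iff.1 this
  exact ⟨k, hk.le⟩

theorem exists_forall_measure_range_le_image_add (ν : Measure Z) [IsFiniteMeasure ν]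
    (f : (ℕ → ℕ) → Z) {ε : ℝ≥0∞} (hε : ε ≠ 0) :
    ∃ σ : ℕ → ℕ, ∀ n, ν (range f) ≤ ν (f '' {x | ∀ i < n, x i ≤ σ i}) + ε := by
  obtain ⟨δ, hδ, hδε⟩ := ENNReal.exists_pos_sum_of_countable hε ℕ
  choose c hc using fun n T =>
    exists_measure_image_le_image_inter_add ν f T n (ENNReal.coe_ne_zero.2 (hδ n).ne')
  let T : ℕ → Set (ℕ → ℕ) := fun n => Nat.rec univ (fun n Tn => Tn ∩ {x | x n ≤ c n Tn}) n
  refine ⟨fun i => c i (T i), fun n => ?_⟩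
  have hT : ∀ n, T n ⊆ {x | ∀ i < n, x i ≤ c i (T i)} := by
    intro n
    induction n with
    | zero => exact fun x _ i hi => absurd hi (Nat.not_lt_zero i)
    | succ n ih =>
      rintro x ⟨hx, hxn⟩ i hi
      rcases Nat.lt_succ_iff_lt_or_eq.1 hi with hi | rfl
      exacts [ih hx i hi, hxn]
  have hrange : ∀ n, ν (range f) ≤ ν (f '' T n) + ∑ i ∈ Finset.range n, (δ i : ℝ≥0∞) := by
    intro n
    induction n with
    | zero => simp [T]
    | succ n ih =>
      calc ν (range f) ≤ ν (f '' T n) + ∑ i ∈ Finset.range n, (δ i : ℝ≥0∞) := ih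
        _ ≤ ν (f '' T (n + 1)) + δ n + ∑ i ∈ Finset.range n, (δ i : ℝ≥0∞) :=
          add_le_add_left (hc n (T n)) _
        _ = ν (f '' T (n + 1)) + ∑ i ∈ Finset.range (n + 1), (δ i : ℝ≥0∞) := by
          rw [Finset.sum_range_succ, add_assoc, add_comm (δ n : ℝ≥0∞)]
  exact (hrange n).trans
    (add_le_add (measure_mono (image_mono (hT n))) ((ENNReal.sum_le_tsum _).trans hδε.le))

variable [MetricSpace Z] [OpensMeasurableSpace Z]

theorem exists_isCompact_subset_range_measure_le_add
    (ν : Measure Z) [IsFiniteMeasure ν] {f : (ℕ → ℕ) → Z} (hf : Continuous f)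
    {ε : ℝ≥0∞} (hε : ε ≠ 0) :
    ∃ C, IsCompact C ∧ C ⊆ range f ∧ ν (range f) ≤ ν C + ε := by
  obtain ⟨σ, hσ⟩ := exists_forall_measure_range_le_image_add ν f hε
  refine ⟨f '' univ.pi fun i => Iic (σ i),
    (isCompact_univ_pi fun i => (finite_Iic (σ i)).isCompact).image hf,
    image_subset_range _ _, ?_⟩
  have hanti : Antitone fun n => closure (f '' {x | ∀ i < n, x i ≤ σ i}) :=
    fun m n hmn => closure_mono (image_mono fun x hx i hi => hx i (hi.trans_le hmn))
  calc ν (range f) ≤ ν (⋂ n, closure (f '' {x | ∀ i < n, x i ≤ σ i})) + ε := by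
        rw [hanti.measure_iInter (fun n => measurableSet_closure.nullMeasurableSet)
          ⟨0, measure_ne_top ν _⟩, ENNReal.iInf_add]
        exact le_iInf fun n => (hσ n).trans (add_le_add_left (measure_mono subset_closure) _)
    _ ≤ _ := add_le_add_left (measure_mono (iInter_closure_image_subset_image_pi hf σ)) _

theorem MeasureTheory.AnalyticSet.nullMeasurableSet {A : Set Z} (hA : AnalyticSet A)
    (ν : Measure Z) [IsFiniteMeasure ν] : NullMeasurableSet A ν := by
  rw [AnalyticSet] at hA
  obtain rfl | ⟨f, hf, rfl⟩ := hA
  · exact nullMeasurableSet_empty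
  choose C hC hCf hCν using fun n : ℕ => exists_isCompact_subset_range_measure_le_add ν hf
    (ENNReal.inv_ne_zero.2 (ENNReal.natCast_ne_top n))
  have hS : MeasurableSet (⋃ n, C n) := .iUnion fun n => (hC n).isClosed.measurableSet
  have hSf : ⋃ n, C n ⊆ range f := iUnion_subset hCf
  have hle : ν (range f) ≤ ν (⋃ n, C n) := by
    refine ENNReal.le_of_forall_pos_le_add fun ε hε _ => ?_
    obtain ⟨n, hn⟩ := ENNReal.exists_inv_nat_lt (ENNReal.coe_ne_zero.2 hε.ne')
    exact (hCν n).trans (add_le_add (measure_mono (subset_iUnion C n)) hn.le)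
  exact hS.nullMeasurableSet.congr
    (ae_eq_of_subset_of_measure_ge hSf hle hS.nullMeasurableSet (measure_ne_top ν _))

theorem MeasureTheory.AnalyticSet.measurableSet_preimage {Ξ : Type*} [MeasurableSpace Ξ]
    {μ : Measure Ξ} [SFinite μ] [μ.IsComplete]
    {A : Set Z} (hA : AnalyticSet A) {φ : Ξ → Z} (hφ : Measurable φ) :
    MeasurableSet (φ ⁻¹' A) :=
  (((hA.nullMeasurableSet (μ.toFinite.map φ)).preimage ⟨hφ, .rfl⟩).mono_ac
    (absolutelyContinuous_toFinite μ)).measurable_of_complete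

end Capacity

section Selection

variable {Ξ Z : Type*} [MeasurableSpace Ξ] [MetricSpace Z] [MeasurableSpace Z] {F : Ξ → Set Z}

theorem exists_measurable_mem_forall_inter_ball_nonempty {u : ℕ → Z} (hu : DenseRange u)
    (hF : ∀ U, IsOpen U → MeasurableSet {ξ | (F ξ ∩ U).Nonempty}) {s : Ξ → Set Z}
    (hs_open : ∀ ξ, IsOpen (s ξ)) (hs : ∀ z, MeasurableSet {ξ | z ∈ s ξ})
    (hFs : ∀ ξ, (F ξ ∩ s ξ).Nonempty) {r : ℝ} (hr : 0 < r) :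
    ∃ g : Ξ → Z, Measurable g ∧ ∀ ξ, g ξ ∈ s ξ ∧ (F ξ ∩ ball (g ξ) r).Nonempty := by
  classical
  have hu_mem : ∀ ξ, ∃ n, u n ∈ s ξ ∧ (F ξ ∩ ball (u n) r).Nonempty := fun ξ => by
    obtain ⟨y, hyF, hys⟩ := hFs ξ
    obtain ⟨ε, hε, hεs⟩ := isOpen_iff.1 (hs_open ξ) y hys
    obtain ⟨n, hn⟩ := hu.exists_dist_lt y (lt_min hε hr)
    exact ⟨n, hεs (mem_ball'.2 (hn.trans_le (min_le_left _ _))), y, hyF,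
      mem_ball.2 (hn.trans_le (min_le_right _ _))⟩
  exact ⟨fun ξ => u (Nat.find (hu_mem ξ)), (measurable_from_nat (f := u)).comp
    (measurable_find hu_mem fun n => (hs (u n)).inter (hF _ isOpen_ball)),
    fun ξ => Nat.find_spec (hu_mem ξ)⟩

theorem exists_measurable_forall_mem [BorelSpace Z] [TopologicalSpace.SeparableSpace Z]
    [CompleteSpace Z]
    (hF : ∀ U, IsOpen U → MeasurableSet {ξ | (F ξ ∩ U).Nonempty})
    (hcl : ∀ ξ, IsClosed (F ξ)) (hne : ∀ ξ, (F ξ).Nonempty) :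
    ∃ ψ : Ξ → Z, Measurable ψ ∧ ∀ ξ, ψ ξ ∈ F ξ := by
  rcases isEmpty_or_nonempty Ξ with hΞ | ⟨⟨ξ₀⟩⟩
  · exact ⟨isEmptyElim, measurable_of_empty _, isEmptyElim⟩
  have : Nonempty Z := ⟨(hne ξ₀).some⟩
  obtain ⟨u, hu⟩ := TopologicalSpace.exists_dense_seq Z
  let Approx (k : ℕ) (g : Ξ → Z) : Prop :=
    Measurable g ∧ ∀ ξ, (F ξ ∩ ball (g ξ) ((1 / 2) ^ k)).Nonempty
  obtain ⟨g₀, hg₀, h₀⟩ := exists_measurable_mem_forall_inter_ball_nonempty hu hF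
    (s := fun _ => univ) (fun _ => isOpen_univ) (fun _ => .univ) (by simpa using hne)
    (r := (1 / 2) ^ 0) (by positivity)
  let start : {g // Approx 0 g} := ⟨g₀, hg₀, fun ξ => (h₀ ξ).2⟩
  have exists_next : ∀ k (g : {g // Approx k g}),
      ∃ g' : {g // Approx (k + 1) g}, ∀ ξ, dist (g'.1 ξ) (g.1 ξ) < (1 / 2) ^ k := by
    rintro k ⟨g, hg, hgF⟩
    obtain ⟨g', hg', h⟩ := exists_measurable_mem_forall_inter_ball_nonempty hu hF
      (s := fun ξ => ball (g ξ) ((1 / 2) ^ k)) (fun _ => isOpen_ball)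
      (fun z => by simp_rw [mem_ball_comm]; exact hg measurableSet_ball) hgF
      (r := (1 / 2) ^ (k + 1)) (by positivity)
    exact ⟨⟨g', hg', fun ξ => (h ξ).2⟩, fun ξ => (h ξ).1⟩
  choose next hnext using exists_next
  let g : ∀ k, {g // Approx k g} := fun k => Nat.rec start next k
  have hcauchy : ∀ ξ, CauchySeq fun k => (g k).1 ξ := fun ξ =>
    cauchySeq_of_le_geometric (1 / 2) 1 (by norm_num) fun k => by
      rw [one_mul, dist_comm]
      exact (hnext k (g k) ξ).le
  choose ψ hψ using fun ξ => cauchySeq_tendsto_of_complete (hcauchy ξ)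
  refine ⟨ψ, measurable_of_tendsto_metrizable (fun k => (g k).2.1) (tendsto_pi_nhds.2 hψ),
    fun ξ => ?_⟩
  have hdist : ∀ k, infDist (ψ ξ) (F ξ) ≤ dist (ψ ξ) ((g k).1 ξ) + (1 / 2) ^ k := fun k => by
    obtain ⟨y, hyF, hy⟩ := (g k).2.2 ξ
    calc infDist (ψ ξ) (F ξ) ≤ dist (ψ ξ) y := infDist_le_dist_of_mem hyF
      _ ≤ dist (ψ ξ) ((g k).1 ξ) + dist ((g k).1 ξ) y := dist_triangle _ _ _
      _ ≤ _ := add_le_add_right (mem_ball'.1 hy).le _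
  have hlim : Tendsto (fun k => dist (ψ ξ) ((g k).1 ξ) + (1 / 2 : ℝ) ^ k) atTop (𝓝 0) := by
    simpa using ((tendsto_const_nhds (x := ψ ξ)).dist (hψ ξ)).add
      (tendsto_pow_atTop_nhds_zero_of_lt_one (by norm_num : (0 : ℝ) ≤ 1 / 2) (by norm_num))
  exact ((hcl ξ).mem_iff_infDist_zero (hne ξ)).2
    (le_antisymm (ge_of_tendsto' hlim hdist) infDist_nonneg)

end Selection

section NearestPoints

variable {Z : Type*} [NormedAddCommGroup Z]

def nearestPoints (K : Set Z) (z : Z) : Set Z := {y ∈ K | ‖y - z‖ = infDist z K}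

theorem isClosed_nearestPoints {K : Set Z} (hK : IsClosed K) (z : Z) :
    IsClosed (nearestPoints K z) :=
  hK.inter (isClosed_eq (continuous_norm.comp (continuous_sub_right z)) continuous_const)

theorem analyticSet_setOf_nearestPoints_inter_nonempty [CompleteSpace Z]
    [TopologicalSpace.SeparableSpace Z] [MeasurableSpace Z] [BorelSpace Z] {K B : Set Z}
    (hK : IsClosed K) (hB : MeasurableSet B) :
    AnalyticSet {z | (nearestPoints K z ∩ B).Nonempty} := by
  have hgraph : MeasurableSet {p : Z × Z | p.2 ∈ nearestPoints K p.1 ∩ B} :=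
    ((hK.measurableSet.preimage measurable_snd).inter
      (isClosed_eq (continuous_norm.comp (continuous_snd.sub continuous_fst))
        ((continuous_infDist_pt K).comp continuous_fst)).measurableSet).inter
      (hB.preimage measurable_snd)
  convert hgraph.analyticSet_image measurable_fst using 1
  ext z
  constructor
  · rintro ⟨y, hy⟩
    exact ⟨(z, y), hy, rfl⟩
  · rintro ⟨⟨_, y⟩, hy, rfl⟩
    exact ⟨y, hy⟩

end NearestPoints

theorem metricProjection_measurable_and_selection_general
    {Ξ : Type*} [MeasurableSpace Ξ] (μ : Measure Ξ) [SigmaFinite μ]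
    (hμ : μ.IsComplete)
    {Z : Type*} [NormedAddCommGroup Z] [CompleteSpace Z]
    [TopologicalSpace.SeparableSpace Z] [MeasurableSpace Z] [BorelSpace Z]
    (K : Set Z) (hKcl : IsClosed K)
    (φ : Ξ → Z) (hφ : Measurable φ) :
    (∀ B : Set Z, MeasurableSet B →
        MeasurableSet {ξ | ({y ∈ K | ‖y - φ ξ‖ = infDist (φ ξ) K} ∩ B).Nonempty}) ∧
    ((∀ ξ, ({y ∈ K | ‖y - φ ξ‖ = infDist (φ ξ) K}).Nonempty) →
      ∃ ψ : Ξ → Z, Measurable ψ ∧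
        ∀ᵐ ξ ∂μ, ψ ξ ∈ K ∧ ‖ψ ξ - φ ξ‖ = infDist (φ ξ) K) := by
  have hmeas (B : Set Z) (hB : MeasurableSet B) :
      MeasurableSet {ξ | (nearestPoints K (φ ξ) ∩ B).Nonempty} :=
    (analyticSet_setOf_nearestPoints_inter_nonempty hKcl hB).measurableSet_preimage (μ := μ) hφ
  refine ⟨hmeas, fun hne => ?_⟩
  obtain ⟨ψ, hψ, hψF⟩ := exists_measurable_forall_mem (fun U hU => hmeas U hU.measurableSet)
    (fun ξ => isClosed_nearestPoints hKcl (φ ξ)) hne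
  exact ⟨ψ, hψ, ae_of_all μ hψF⟩

/-- Measurability of the metric projection onto a nonempty closed subset `K` of a
separable Banach space, and existence of a measurable a.e. selection realizing the
distance, over a complete σ-finite measure space. -/
theorem metricProjection_measurable_and_selection
    {Ξ : Type*} [MeasurableSpace Ξ] (μ : Measure Ξ) [SigmaFinite μ]
    (hμ : μ.IsComplete)
    {Z : Type*} [NormedAddCommGroup Z] [NormedSpace ℝ Z] [CompleteSpace Z]
    [TopologicalSpace.SeparableSpace Z] [MeasurableSpace Z] [BorelSpace Z]
    (K : Set Z) (hKcl : IsClosed K) (hKne : K.Nonempty)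
    (φ : Ξ → Z) (hφ : Measurable φ) :
    (∀ B : Set Z, MeasurableSet B →
        MeasurableSet {ξ | ({y ∈ K | ‖y - φ ξ‖ = infDist (φ ξ) K} ∩ B).Nonempty}) ∧
    ((∀ ξ, ({y ∈ K | ‖y - φ ξ‖ = infDist (φ ξ) K}).Nonempty) →
      ∃ ψ : Ξ → Z, Measurable ψ ∧
        ∀ᵐ ξ ∂μ, ψ ξ ∈ K ∧ ‖ψ ξ - φ ξ‖ = infDist (φ ξ) K) :=
  metricProjection_measurable_and_selection_general μ hμ K hKcl φ hφ
end

section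
/- Let K ⊆ Z be a subset of a Banach space, z ∈ K, v ∈ T_K(z) an adjacent tangent vector, and let T^{(2)}_K(z,v) = {h : lim_{ε→0⁺} dist(z + εv + ε²h, K)/ε² = 0} be the second-order adjacent set. Then C_K(z) + T^{(2)}_K(z,v) ⊆ T^{(2)}_K(z,v), where C_K(z) is the Clarke tangent cone of K at z. -/
/-!
Fix `w ∈ C_K(z)` and `h ∈ T²_K(z,v)`. For small `t > 0` pick `y ∈ K` with
`‖z + t•v + t²•h - y‖ = o(t²)`; then `‖y - z‖ = O(t)`, so `y → z` inside `K`. The Clarke property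
applies uniformly at such base points and step `t²`, giving `dist(y + t²•w, K) = o(t²)`, and
`z + t•v + t²•(w + h)` is within `o(t²)` of `y + t²•w`.
-/

open Metric
open scoped Pointwise

/-- The Clarke tangent cone to `K` at `z`. -/
def clarkeTangentCone {Z : Type*} [NormedAddCommGroup Z] [NormedSpace ℝ Z]
    (K : Set Z) (z : Z) : Set Z :=
  {v | ∀ ε > (0 : ℝ), ∃ δ > (0 : ℝ), ∀ t : ℝ, 0 < t → t < δ →
    ∀ y ∈ K, ‖y - z‖ < δ → infDist (y + t • v) K < ε * t}

/-- The adjacent tangent cone to `K` at `z`. -/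
def adjacentCone {Z : Type*} [NormedAddCommGroup Z] [NormedSpace ℝ Z]
    (K : Set Z) (z : Z) : Set Z :=
  {v | ∀ ε > (0 : ℝ), ∃ δ > (0 : ℝ), ∀ t : ℝ, 0 < t → t < δ →
    infDist (z + t • v) K < ε * t}

/-- The second-order adjacent set to `K` at `(z, v)`:
`h ∈ T²_K(z,v)` iff `dist(z + t•v + t²•h, K)/t² → 0` as `t → 0⁺`. -/
def secondAdjacentSet {Z : Type*} [NormedAddCommGroup Z] [NormedSpace ℝ Z]
    (K : Set Z) (z v : Z) : Set Z :=
  {h | ∀ ε > (0 : ℝ), ∃ δ > (0 : ℝ), ∀ t : ℝ, 0 < t → t < δ →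
    infDist (z + t • v + (t ^ 2) • h) K < ε * t ^ 2}

open Filter Topology Set

theorem eventually_nhdsGT_zero_iff {P : ℝ → Prop} :
    (∀ᶠ t in 𝓝[>] 0, P t) ↔ ∃ δ > 0, ∀ t : ℝ, 0 < t → t < δ → P t := by
  simp only [(nhdsGT_basis (0 : ℝ)).eventually_iff, mem_Ioo, and_imp, gt_iff_lt]

section

variable {Z : Type*} [NormedAddCommGroup Z] [NormedSpace ℝ Z]

theorem mem_secondAdjacentSet_iff {K : Set Z} {z v h : Z} :
    h ∈ secondAdjacentSet K z v ↔
      ∀ ε > (0 : ℝ), ∀ᶠ t in 𝓝[>] 0, infDist (z + t • v + t ^ 2 • h) K < ε * t ^ 2 := by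
  simp only [secondAdjacentSet, mem_ofPred_eq, eventually_nhdsGT_zero_iff]

theorem exists_infDist_add_smul_lt_of_mem_clarkeTangentCone {K : Set Z} {z w : Z}
    (hw : w ∈ clarkeTangentCone K z) {ε : ℝ} (hε : 0 < ε) :
    ∃ δ > (0 : ℝ), ∀ s : ℝ, 0 < s → s < δ → ∀ (x : Z), ∀ y ∈ K, ‖y - z‖ < δ →
      infDist (x + s • w) K < ε * s + dist x y := by
  obtain ⟨δ, hδ, H⟩ := hw ε hε
  refine ⟨δ, hδ, fun s hs hsδ x y hy hyz => ?_⟩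
  calc infDist (x + s • w) K ≤ infDist (y + s • w) K + dist (x + s • w) (y + s • w) :=
        infDist_le_infDist_add_dist
    _ = infDist (y + s • w) K + dist x y := by rw [dist_add_right]
    _ < ε * s + dist x y := by gcongr; exact H s hs hsδ y hy hyz

theorem eventually_exists_near_of_mem_secondAdjacentSet {K : Set Z} {z v h : Z} (hz : z ∈ K)
    (hh : h ∈ secondAdjacentSet K z v) {ε : ℝ} (hε : 0 < ε) :
    ∀ᶠ t in 𝓝[>] 0, ∃ y ∈ K, dist (z + t • v + t ^ 2 • h) y < ε * t ^ 2 ∧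
      ‖y - z‖ < t * ‖v‖ + t ^ 2 * (‖h‖ + ε) := by
  filter_upwards [mem_secondAdjacentSet_iff.mp hh ε hε, self_mem_nhdsWithin] with t hK (ht : 0 < t)
  obtain ⟨y, hyK, hy⟩ := (infDist_lt_iff ⟨z, hz⟩).mp hK
  refine ⟨y, hyK, hy, ?_⟩
  calc ‖y - z‖ = ‖(y - (z + t • v + t ^ 2 • h)) + t • v + t ^ 2 • h‖ := by congr 1; abel
    _ ≤ dist (z + t • v + t ^ 2 • h) y + ‖t • v‖ + ‖t ^ 2 • h‖ := by
        rw [dist_comm, dist_eq_norm]; exact norm_add₃_le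
    _ < t * ‖v‖ + t ^ 2 * (‖h‖ + ε) := by
        rw [norm_smul, norm_smul, Real.norm_of_nonneg ht.le, Real.norm_of_nonneg (by positivity)]
        linarith

end

theorem clarke_add_secondAdjacent_subset_general
    {Z : Type*} [NormedAddCommGroup Z] [NormedSpace ℝ Z]
    (K : Set Z) (z : Z) (hz : z ∈ K) (v : Z) :
    clarkeTangentCone K z + secondAdjacentSet K z v ⊆ secondAdjacentSet K z v := by
  rintro _ ⟨w, hw, h, hh, rfl⟩
  rw [mem_secondAdjacentSet_iff]
  intro ε hε
  obtain ⟨δ, hδ, hclarke⟩ :=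
    exists_infDist_add_smul_lt_of_mem_clarkeTangentCone hw (half_pos hε)
  have hsmall : ∀ᶠ t in 𝓝[>] (0 : ℝ), t ^ 2 < δ ∧ t * ‖v‖ + t ^ 2 * (‖h‖ + ε / 2) < δ := by
    refine nhdsWithin_le_nhds (Eventually.and ?_ ?_) <;>
      refine (Continuous.tendsto' ?_ 0 0 (by simp)).eventually (gt_mem_nhds hδ) <;> fun_prop
  filter_upwards [eventually_exists_near_of_mem_secondAdjacentSet hz hh (half_pos hε), hsmall,
    self_mem_nhdsWithin] with t ⟨y, hyK, hy, hyz⟩ ⟨ht2δ, htδ⟩ (ht : 0 < t)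
  calc infDist (z + t • v + t ^ 2 • (w + h)) K
      = infDist ((z + t • v + t ^ 2 • h) + t ^ 2 • w) K := by rw [smul_add]; abel_nf
    _ < ε / 2 * t ^ 2 + dist (z + t • v + t ^ 2 • h) y :=
        hclarke _ (by positivity) ht2δ _ y hyK (hyz.trans htδ)
    _ < ε * t ^ 2 := by linarith

/-- `C_K(z) + T²_K(z,v) ⊆ T²_K(z,v)` for `z ∈ K` and `v` in the adjacent cone. -/
theorem clarke_add_secondAdjacent_subset
    {Z : Type*} [NormedAddCommGroup Z] [NormedSpace ℝ Z]
    (K : Set Z) (z : Z) (hz : z ∈ K) (v : Z) (hv : v ∈ adjacentCone K z) :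
    clarkeTangentCone K z + secondAdjacentSet K z v ⊆ secondAdjacentSet K z v :=
  clarke_add_secondAdjacent_subset_general K z hz v
end
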